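/- Let J = (J_1,…,J_n) be a Grassmann necklace of type (k,n) with 1 ≤ k ≤ n−1, and for each i ∈ [n] write the elements of J_i as a_1^i <_i ⋯ <_i a_k^i. Then for every w ∈ S_n with w_n = n and cdes_L(w) = k, the following are equivalent: (i) cdes_L(w|_{[i, a_j^i]}) ≤ j−1 for all i ∈ [n] and j ∈ [k]; (ii) J_j ≤_j I_r(w) for all r, j ∈ [n]. -/

import Mathlib

namespace PositroidPaper

variable {n : ℕ}

/-- The last element `n` of `[n] = {1,…,n}`, realized as the last element of `Fin n`. -/
def lastF (n : ℕ) [NeZero n] : Fin n :=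
  ⟨n - 1, by have := Nat.pos_of_ne_zero (NeZero.ne n); omega⟩

/-- The Gale order `S ≤ᵢ T` with respect to the `i`-order on `Fin n`
(the `i`-order is transported to the natural order on `Fin n` by `a ↦ a - i`). -/
def galeLE (i : Fin n) (S T : Finset (Fin n)) : Prop :=
  List.Forall₂ (· ≤ ·) ((S.image (fun a => a - i)).sort (· ≤ ·))
    ((T.image (fun a => a - i)).sort (· ≤ ·))

/-- A Grassmann necklace of type `(k,n)`. -/
def IsGrassmannNecklace (n k : ℕ) [NeZero n] (J : Fin n → Finset (Fin n)) : Prop :=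
  (∀ i, (J i).card = k) ∧
    ∀ i : Fin n,
      (i ∈ J i → ∃ j : Fin n, J (i + 1) = insert j ((J i).erase i)) ∧
      (i ∉ J i → J (i + 1) = J i)

/-- `B(J)`: the `k`-subsets `B` of `[n]` with `J_i ≤ᵢ B` for all `i`. -/
noncomputable def necklaceBases (n k : ℕ) (J : Fin n → Finset (Fin n)) :
    Finset (Finset (Fin n)) := by
  classical
  exact (Finset.powersetCard k (Finset.univ : Finset (Fin n))).filter
    (fun B => ∀ i, galeLE i (J i) B)

/-- The maximal minor of a `k × n` matrix on the column set `I` (taken in increasing order);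
junk value `0` if `I` does not have exactly `k` elements. -/
noncomputable def colMinor {k n : ℕ} (A : Matrix (Fin k) (Fin n) ℝ) (I : Finset (Fin n)) : ℝ :=
  if h : I.card = k then (A.submatrix id (fun j => ((I.orderIsoOfFin h) j : Fin n))).det else 0

/-- `Bs` is the set of bases of a rank-`k` positroid on `[n]`. -/
def IsPositroidBases (n k : ℕ) (Bs : Finset (Finset (Fin n))) : Prop :=
  ∃ A : Matrix (Fin k) (Fin n) ℝ, A.rank = k ∧
    (∀ I : Finset (Fin n), 0 ≤ colMinor A I) ∧
    ∀ I : Finset (Fin n), I ∈ Bs ↔ I.card = k ∧ colMinor A I ≠ 0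

/-- The 0/1 indicator vector `e_B ∈ ℝ^n` of `B ⊆ [n]`. -/
def indic (B : Finset (Fin n)) : Fin n → ℝ := fun a => if a ∈ B then 1 else 0

/-- The positroid polytope `P_J = conv{e_B : B ∈ B(J)}`. -/
def PJ (n k : ℕ) (J : Fin n → Finset (Fin n)) : Set (Fin n → ℝ) :=
  convexHull ℝ {x | ∃ B ∈ necklaceBases n k J, x = indic B}

/-- The `j`-th element (0-indexed) of `S` in the `i`-order. -/
noncomputable def nthGale [NeZero n] (i : Fin n) (S : Finset (Fin n)) (j : ℕ) : Fin n :=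
  ((S.image (fun a => a - i)).sort (· ≤ ·)).getD j 0 + i

/-- The (closed) cyclic interval `[i,j] ⊆ [n]`. -/
def cycInterval (i j : Fin n) : Finset (Fin n) :=
  Finset.univ.filter (fun a => a - i ≤ j - i)

/-- `x_{[i,j]} = x_i + x_{i+1} + ⋯ + x_{j-1}` (cyclically; the empty sum if `i = j`). -/
def cycSum (x : Fin n → ℝ) (i j : Fin n) : ℝ :=
  ∑ a ∈ Finset.univ.filter (fun a : Fin n => a - i < j - i), x a

/-- The set of cyclic left descents of the word `w|_S`, where `S ⊆ [n]` is totally ordered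
by the `i`-order: an element `a ∈ S` belongs to this set iff either `a` has a successor `b`
in `S` (w.r.t. the `i`-order) occurring to its left in `w`, or `a` is the maximum of `S`,
`S` has at least two elements, and the minimum of `S` occurs to the left of `a` in `w`. -/
noncomputable def cDesL (w : Equiv.Perm (Fin n)) (i : Fin n) (S : Finset (Fin n)) :
    Finset (Fin n) := by
  classical
  exact S.filter (fun a =>
    (∃ b ∈ S, a - i < b - i ∧ (∀ c ∈ S, a - i < c - i → b - i ≤ c - i) ∧ w⁻¹ b < w⁻¹ a) ∨
    ((∀ b ∈ S, b - i ≤ a - i) ∧ ∃ m ∈ S, m ≠ a ∧ (∀ b ∈ S, m - i ≤ b - i) ∧ w⁻¹ m < w⁻¹ a))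

/-- `cdes_L(w|_S)` where `S` is ordered by the `i`-order. -/
noncomputable def cdesL (w : Equiv.Perm (Fin n)) (i : Fin n) (S : Finset (Fin n)) : ℕ :=
  (cDesL w i S).card

/-- The cyclic rotation `w^{(r)}` of the word `w_1 ⋯ w_n` ending at the letter `r`. -/
def rotTo [NeZero n] (w : Equiv.Perm (Fin n)) (r : Fin n) : Equiv.Perm (Fin n) :=
  (Equiv.addRight (w⁻¹ r + 1)).trans w

/-- `I_r(w) = cDes_L(w^{(r)})`. -/
noncomputable def IrFinset [NeZero n] (w : Equiv.Perm (Fin n)) (r : Fin n) : Finset (Fin n) :=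
  cDesL (rotTo w r) 0 Finset.univ

/-- The vertex set `{e_{I_r(w)} : r ∈ [n]}` of the `(w)`-simplex. -/
def vertexSet [NeZero n] (w : Equiv.Perm (Fin n)) : Set (Fin n → ℝ) :=
  {x | ∃ r : Fin n, x = indic (IrFinset w r)}

/-- The `(w)`-simplex `Δ_(w) = conv{e_{I_1(w)},…,e_{I_n(w)}}`. -/
def simplexW [NeZero n] (w : Equiv.Perm (Fin n)) : Set (Fin n → ℝ) :=
  convexHull ℝ (vertexSet w)

/-- The set `D_J` of permutations labelling the circuit triangulation of `P_J`. -/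
noncomputable def DJ (n k : ℕ) [NeZero n] (J : Fin n → Finset (Fin n)) :
    Finset (Equiv.Perm (Fin n)) := by
  classical
  exact Finset.univ.filter (fun w =>
    w (lastF n) = lastF n ∧ cdesL w 0 Finset.univ = k ∧
      ∀ r j : Fin n, galeLE j (J j) (IrFinset w r))

/-- Connectedness of a matroid on `[n]` given by its set of bases: the ground set admits no
partition into nonempty `A`, `Aᶜ` such that every basis is a union of a basis of the
restriction to `A` and one of the restriction to `Aᶜ`, all such unions being bases. -/
def ConnectedBases (Bs : Finset (Finset (Fin n))) : Prop :=
  ¬ ∃ A : Finset (Fin n), A.Nonempty ∧ Aᶜ.Nonempty ∧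
      ∀ B₁ ∈ Bs, ∀ B₂ ∈ Bs, (B₁ ∩ A) ∪ (B₂ \ A) ∈ Bs

/-- `Δ_(u)` and `Δ_(w)` share a common facet. -/
def SharedFacet [NeZero n] (u w : Equiv.Perm (Fin n)) : Prop :=
  (vertexSet u ∩ vertexSet w).ncard = n - 1 ∧
    simplexW u ∩ simplexW w = convexHull ℝ (vertexSet u ∩ vertexSet w)

/-- The graph `Γ_J` of the circuit triangulation of `P_J`. -/
def gammaJ (n k : ℕ) [NeZero n] (J : Fin n → Finset (Fin n)) :
    SimpleGraph (Equiv.Perm (Fin n)) where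
  Adj u w := u ≠ w ∧ u ∈ DJ n k J ∧ w ∈ DJ n k J ∧ SharedFacet u w
  symm := by
    constructor
    rintro u w ⟨hne, hu, hw, hc, hi⟩
    refine ⟨hne.symm, hw, hu, ?_, ?_⟩
    · rwa [Set.inter_comm]
    · rw [Set.inter_comm (simplexW w) (simplexW u), Set.inter_comm (vertexSet w) (vertexSet u)]
      exact hi
  loopless := ⟨fun u h => h.1 rfl⟩

/-- Graph distance in `Γ_J`. -/
noncomputable def distJ (n k : ℕ) [NeZero n] (J : Fin n → Finset (Fin n))
    (u w : Equiv.Perm (Fin n)) : ℕ :=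
  (gammaJ n k J).dist u w

/-- The partial order `≺` on `D_J` determined by `w₀`. -/
def precJ (n k : ℕ) [NeZero n] (J : Fin n → Finset (Fin n))
    (w0 u v : Equiv.Perm (Fin n)) : Prop :=
  u ≠ v ∧ distJ n k J w0 u + distJ n k J u v = distJ n k J w0 v

/-- `cover(w)`: the number of elements of `D_J` covered by `w` in `(D_J, ≺)`. -/
noncomputable def coverNum (n k : ℕ) [NeZero n] (J : Fin n → Finset (Fin n))
    (w0 w : Equiv.Perm (Fin n)) : ℕ :=
  {u : Equiv.Perm (Fin n) | u ∈ DJ n k J ∧ precJ n k J w0 u w ∧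
    ¬ ∃ v ∈ DJ n k J, precJ n k J w0 u v ∧ precJ n k J w0 v w}.ncard

/-- The facet of `Δ_(w)` obtained by deleting the vertex `e_{I_r(w)}`. -/
def facetW [NeZero n] (w : Equiv.Perm (Fin n)) (r : Fin n) : Set (Fin n → ℝ) :=
  convexHull ℝ {x | ∃ r' : Fin n, r' ≠ r ∧ x = indic (IrFinset w r')}

/-- The Ehrhart counting function `L(X,t) = #(t·X ∩ ℤ^m)`. -/
noncomputable def Lcount {m : ℕ} (X : Set (Fin m → ℝ)) (t : ℕ) : ℕ :=
  ((fun x : Fin m → ℝ => (t : ℝ) • x) '' X ∩ {x | ∀ a, ∃ z : ℤ, x a = (z : ℝ)}).ncard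

/-- Projection `ℝ^n → ℝ^{n-1}` onto the first `n-1` coordinates. -/
def proj (n : ℕ) (x : Fin n → ℝ) : Fin (n - 1) → ℝ :=
  fun a => x (Fin.castLE (Nat.sub_le n 1) a)

/-- `F` is an upper facet of `Q ⊆ ℝ^m`. -/
def IsUpperFacet {m : ℕ} (Q F : Set (Fin m → ℝ)) : Prop :=
  ∃ a b : Fin m, a ≤ b ∧ ∃ c : ℤ,
    F = Q ∩ {x | ∑ t ∈ Finset.Icc a b, x t = (c : ℝ)} ∧
    Q ⊆ {x | ∑ t ∈ Finset.Icc a b, x t ≤ (c : ℝ)} ∧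
    Module.finrank ℝ (affineSpan ℝ F).direction = m - 1

/-- The half-open polytope: `Q` with all its upper facets removed. -/
def halfOpen {m : ℕ} (Q : Set (Fin m → ℝ)) : Set (Fin m → ℝ) :=
  Q \ ⋃₀ {F | IsUpperFacet Q F}

/-- The half-open simplex `∇°_w`. -/
def nablaO [NeZero n] (w : Equiv.Perm (Fin n)) : Set (Fin n → ℝ) :=
  {y | 0 < y (w 0) ∧ y (w (lastF n)) ≤ 1 ∧
    ∀ p : Fin n, p ≠ lastF n →
      (w p < w (p + 1) → y (w p) ≤ y (w (p + 1))) ∧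
      (w (p + 1) < w p → y (w p) < y (w (p + 1)))}

/-- `des(w) = #{i ∈ [n-1] : w_i > w_{i+1}}`. -/
noncomputable def desNum [NeZero n] (w : Equiv.Perm (Fin n)) : ℕ := by
  classical
  exact (Finset.univ.filter (fun p : Fin n => p ≠ lastF n ∧ w (p + 1) < w p)).card

/-- `F` is a facet of the polytope `P ⊆ ℝ^n`. -/
def IsFacetOf {n : ℕ} (P F : Set (Fin n → ℝ)) : Prop :=
  ∃ (u : Fin n → ℝ) (c : ℝ),
    F = P ∩ {x | ∑ a, u a * x a = c} ∧ P ⊆ {x | ∑ a, u a * x a ≤ c} ∧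
    Module.finrank ℝ (affineSpan ℝ F).direction + 1 =
      Module.finrank ℝ (affineSpan ℝ P).direction

/-!
By the counting description of the Gale order, (ii) says that for all `r`, `i` and `j`, at most
`j - 1` elements of `I_r(w)` precede `a_j^i` in the `i`-order. Read cyclically from the position
just after `r`, the word `w` has `I_r(w) = {a | a + 1 occurs before a}`. Counting these `a` inside
`[i, x)`, and adding one if `i` occurs before `x`, gives the number of cyclic descents of
`w|_{[i,x]}` read from that cut (from the start of `w`, this is `cdes_L(w|_{[i,x]})`). This
number does not depend on the cut: it is the winding number of the closed walk `a ↦ w⁻¹ a` along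
the cycle `i → i + 1 → ⋯ → x → i`. Hence `#(I_r(w) ∩ [i, x)) ≤ cdes_L(w|_{[i,x]})` for every `r`,
with equality when the cut is just before `x`. Taking `x = a_j^i` gives both implications.
-/

section CyclicInterval

lemma mem_cycInterval {i x a : Fin n} : a ∈ cycInterval i x ↔ a - i ≤ x - i := by
  simp [cycInterval]

lemma right_mem_cycInterval (i x : Fin n) : x ∈ cycInterval i x :=
  mem_cycInterval.2 le_rfl

variable [NeZero n]

lemma left_mem_cycInterval (i x : Fin n) : i ∈ cycInterval i x := by
  simp [mem_cycInterval]

lemma cycInterval_self (i : Fin n) : cycInterval i i = {i} := by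
  ext a
  rw [mem_cycInterval, sub_self, nonpos_iff_eq_zero, sub_eq_zero, Finset.mem_singleton]

lemma cycInterval_zero_lastF : cycInterval 0 (lastF n) = Finset.univ := by
  ext a
  simp only [mem_cycInterval, sub_zero, Finset.mem_univ, iff_true, Fin.le_def]
  exact Nat.le_sub_one_of_lt a.isLt

lemma sub_lt_sub_iff_le_and_ne {i x a : Fin n} : a - i < x - i ↔ a - i ≤ x - i ∧ a ≠ x := by
  rw [lt_iff_le_and_ne, sub_left_injective.ne_iff]

lemma val_add_one_sub {i x a : Fin n} (h : a - i < x - i) :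
    ((a + 1) - i).val = (a - i).val + 1 := by
  rw [add_sub_right_comm]
  have := (x - i).isLt
  rw [Fin.lt_def] at h
  exact Fin.val_add_one_of_lt' (by omega)

lemma add_one_mem_cycInterval {i x a : Fin n} (h : a - i < x - i) : a + 1 ∈ cycInterval i x := by
  rw [mem_cycInterval, Fin.le_def, val_add_one_sub h]
  exact Fin.lt_def.1 h

def cycIntervalSucc (i x a : Fin n) : Fin n := if a = x then i else a + 1

lemma lastF_add_one : lastF n + 1 = 0 := by
  obtain ⟨m, rfl⟩ : ∃ m, n = m + 1 := ⟨n - 1, (Nat.succ_pred_eq_of_ne_zero (NeZero.ne n)).symm⟩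
  exact Fin.last_add_one m

lemma cycIntervalSucc_zero_lastF : cycIntervalSucc 0 (lastF n) = (· + 1) := by
  ext a : 1
  unfold cycIntervalSucc
  split_ifs with h
  · rw [h, lastF_add_one]
  · rfl

lemma val_cycIntervalSucc_sub {i x a : Fin n} (ha : a ∈ cycInterval i x) :
    (cycIntervalSucc i x a - i).val = if a = x then 0 else (a - i).val + 1 := by
  unfold cycIntervalSucc
  split_ifs with h
  · simp
  · exact val_add_one_sub (sub_lt_sub_iff_le_and_ne.2 ⟨mem_cycInterval.1 ha, h⟩)

lemma bijOn_cycIntervalSucc (i x : Fin n) :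
    Set.BijOn (cycIntervalSucc i x) (cycInterval i x) (cycInterval i x) := by
  have hmaps : Set.MapsTo (cycIntervalSucc i x) (cycInterval i x) (cycInterval i x) := by
    intro a ha
    unfold cycIntervalSucc
    split_ifs with hax
    · exact left_mem_cycInterval i x
    · exact add_one_mem_cycInterval (sub_lt_sub_iff_le_and_ne.2 ⟨mem_cycInterval.1 ha, hax⟩)
  refine (Set.toFinite _).injOn_iff_bijOn_of_mapsTo hmaps |>.1 fun a ha b hb hab => ?_
  have ha' := val_cycIntervalSucc_sub ha
  have hb' := val_cycIntervalSucc_sub hb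
  rw [hab] at ha'
  have : a - i = b - i := by
    ext
    by_cases hax : a = x <;> by_cases hbx : b = x <;>
      simp only [hax, hbx, if_true, if_false] at ha' hb'
    all_goals first | (subst hax hbx; rfl) | omega
  exact sub_left_injective this

end CyclicInterval

section CutDescents

variable {ι : Type*} [NeZero n]

/-- Descents along `σ` of the labels `p`, for the cycle `Fin n` cut open at `c`. -/
def cutDescents (s : Finset ι) (σ : ι → ι) (p : ι → Fin n) (c : Fin n) : Finset ι :=
  {a ∈ s | p (σ a) - c < p a - c}

lemma val_sub_add_val_sub {y z : Fin n} (h : z ≠ y) (c : Fin n) :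
    (z - c).val + (y - z).val = (y - c).val + if z - c < y - c then 0 else n := by
  have hsum := Fin.val_add_eq_ite (z - c) (y - z)
  rw [show z - c + (y - z) = y - c by abel] at hsum
  have hyz : (y - z).val ≠ 0 := fun h0 => h (sub_eq_zero.1 (Fin.ext h0)).symm
  have := (y - z).isLt
  by_cases hlt : z - c < y - c <;> simp only [hlt, if_true, if_false] <;>
    simp only [Fin.lt_def, not_lt] at hlt <;> split_ifs at hsum <;> omega

lemma sum_val_sub_eq_mul_card {s : Finset ι} {σ : ι → ι} (hσ : Set.BijOn σ s s) {p : ι → Fin n}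
    (hp : ∀ a ∈ s, p (σ a) ≠ p a) (c : Fin n) :
    ∑ a ∈ s, (p a - p (σ a)).val = n * (s.card - (cutDescents s σ p c).card) := by
  have hshift : ∑ a ∈ s, (p (σ a) - c).val = ∑ a ∈ s, (p a - c).val :=
    Finset.sum_nbij σ hσ.mapsTo hσ.injOn hσ.surjOn fun _ _ => rfl
  have hterm := Finset.sum_congr rfl fun a ha => val_sub_add_val_sub (hp a ha) c
  rw [Finset.sum_add_distrib, Finset.sum_add_distrib, hshift, Finset.sum_ite] at hterm
  simp only [Finset.sum_const_zero, Finset.sum_const, smul_eq_mul] at hterm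
  have hsplit := Finset.card_filter_add_card_filter_not (s := s) (fun a => p (σ a) - c < p a - c)
  unfold cutDescents
  rw [← hsplit, Nat.add_sub_cancel_left, mul_comm]
  omega

lemma card_cutDescents_eq {s : Finset ι} {σ : ι → ι} (hσ : Set.BijOn σ s s) {p : ι → Fin n}
    (hp : ∀ a ∈ s, p (σ a) ≠ p a) (c c' : Fin n) :
    (cutDescents s σ p c).card = (cutDescents s σ p c').card := by
  have h := (sum_val_sub_eq_mul_card hσ hp c).symm.trans (sum_val_sub_eq_mul_card hσ hp c')
  have hc := Finset.card_le_card (Finset.filter_subset (fun a => p (σ a) - c < p a - c) s)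
  have hc' := Finset.card_le_card (Finset.filter_subset (fun a => p (σ a) - c' < p a - c') s)
  unfold cutDescents at *
  have := Nat.eq_of_mul_eq_mul_left (NeZero.pos n) h
  omega

end CutDescents

section CyclicDescents

variable [NeZero n]

lemma exists_succ_mem_cycInterval_iff {i x a : Fin n} (ha : a ∈ cycInterval i x)
    (P : Fin n → Prop) :
    (∃ b ∈ cycInterval i x, a - i < b - i ∧
        (∀ c ∈ cycInterval i x, a - i < c - i → b - i ≤ c - i) ∧ P b) ↔ a ≠ x ∧ P (a + 1) := by
  constructor
  · rintro ⟨b, hb, hab, hmin, hPb⟩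
    have hlt : a - i < x - i := hab.trans_le (mem_cycInterval.1 hb)
    have hval := val_add_one_sub hlt
    have hb1 := hmin (a + 1) (add_one_mem_cycInterval hlt) (by rw [Fin.lt_def, hval]; omega)
    have hba : b - i = a + 1 - i := by
      rw [Fin.le_def, hval] at hb1
      rw [Fin.lt_def] at hab
      ext
      omega
    exact ⟨(sub_lt_sub_iff_le_and_ne.1 hlt).2, sub_left_injective hba ▸ hPb⟩
  · rintro ⟨hax, hP⟩
    have hlt : a - i < x - i := sub_lt_sub_iff_le_and_ne.2 ⟨mem_cycInterval.1 ha, hax⟩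
    have hval := val_add_one_sub hlt
    refine ⟨a + 1, add_one_mem_cycInterval hlt, by rw [Fin.lt_def, hval]; omega,
      fun c _ hc => ?_, hP⟩
    rw [Fin.lt_def] at hc
    rw [Fin.le_def, hval]
    omega

lemma forall_le_and_exists_min_mem_cycInterval_iff {i x a : Fin n} (ha : a ∈ cycInterval i x)
    (P : Fin n → Prop) :
    ((∀ b ∈ cycInterval i x, b - i ≤ a - i) ∧
        ∃ m ∈ cycInterval i x, m ≠ a ∧ (∀ b ∈ cycInterval i x, m - i ≤ b - i) ∧ P m) ↔
      a = x ∧ i ≠ x ∧ P i := by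
  have hi := left_mem_cycInterval i x
  constructor
  · rintro ⟨hmax, m, -, hma, hmin, hPm⟩
    have hmi := hmin i hi
    rw [sub_self, nonpos_iff_eq_zero, sub_eq_zero] at hmi
    have hax : a = x := sub_left_injective <|
      le_antisymm (mem_cycInterval.1 ha) (hmax x (right_mem_cycInterval i x))
    exact ⟨hax, hax ▸ hmi ▸ hma, hmi ▸ hPm⟩
  · rintro ⟨rfl, hia, hP⟩
    exact ⟨fun b hb => mem_cycInterval.1 hb, i, hi, hia, fun b _ => by simp, hP⟩

lemma cDesL_cycInterval (w : Equiv.Perm (Fin n)) (i x : Fin n) :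
    cDesL w i (cycInterval i x) = cutDescents (cycInterval i x) (cycIntervalSucc i x) ⇑w⁻¹ 0 := by
  unfold cDesL cutDescents
  refine Finset.filter_congr fun a ha => ?_
  rw [exists_succ_mem_cycInterval_iff ha, forall_le_and_exists_min_mem_cycInterval_iff ha,
    sub_zero, sub_zero, cycIntervalSucc]
  by_cases hax : a = x
  · subst hax
    simp only [if_true, ne_eq, not_true_eq_false, false_and, false_or, true_and,
      and_iff_right_iff_imp]
    rintro hlt rfl
    exact lt_irrefl _ hlt
  · simp [hax]

lemma card_cutDescents_cycInterval_eq {p : Fin n → Fin n} (hp : Function.Injective p)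
    (i x c c' : Fin n) :
    (cutDescents (cycInterval i x) (cycIntervalSucc i x) p c).card =
      (cutDescents (cycInterval i x) (cycIntervalSucc i x) p c').card := by
  by_cases hix : i = x
  · subst hix
    simp [cutDescents, cycInterval_self, cycIntervalSucc, Finset.filter_singleton]
  refine card_cutDescents_eq (bijOn_cycIntervalSucc i x) (fun a ha => hp.ne ?_) c c'
  have h := val_cycIntervalSucc_sub ha
  intro heq
  rw [heq] at h
  have := (x - i).isLt
  split_ifs at h with hax
  · exact hix (sub_eq_zero.1 (Fin.ext h) ▸ hax)
  · omega

lemma card_cutDescents_cycInterval_eq_add (p : Fin n → Fin n) (i x c : Fin n) :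
    (cutDescents (cycInterval i x) (cycIntervalSucc i x) p c).card =
      ((cutDescents Finset.univ (· + 1) p c).filter (fun a => a - i < x - i)).card +
        if p i - c < p x - c then 1 else 0 := by
  have hsplit : cycInterval i x = insert x (Finset.univ.filter fun a => a - i < x - i) := by
    ext a
    by_cases hax : a = x
    · simp [hax, right_mem_cycInterval]
    · simp [hax, mem_cycInterval, sub_lt_sub_iff_le_and_ne]
  have hbelow : (Finset.univ.filter fun a => a - i < x - i).filter
      (fun a => p (cycIntervalSucc i x a) - c < p a - c) =
        (cutDescents Finset.univ (· + 1) p c).filter (fun a => a - i < x - i) := by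
    ext a
    simp only [cutDescents, Finset.mem_filter, Finset.mem_univ, true_and]
    constructor
    · rintro ⟨hlt, hd⟩
      rw [cycIntervalSucc, if_neg (sub_lt_sub_iff_le_and_ne.1 hlt).2] at hd
      exact ⟨hd, hlt⟩
    · rintro ⟨hd, hlt⟩
      rw [cycIntervalSucc, if_neg (sub_lt_sub_iff_le_and_ne.1 hlt).2]
      exact ⟨hlt, hd⟩
  rw [cutDescents, hsplit, Finset.filter_insert, show cycIntervalSucc i x x = i from if_pos rfl,
    hbelow]
  split_ifs with hd
  · rw [Finset.card_insert_of_notMem (by simp)]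
  · rfl

lemma rotTo_inv_apply (w : Equiv.Perm (Fin n)) (r b : Fin n) :
    (rotTo w r)⁻¹ b = w⁻¹ b - (w⁻¹ r + 1) := by
  rw [Equiv.Perm.inv_def, Equiv.symm_apply_eq]
  simp [rotTo, add_assoc]

lemma IrFinset_eq_cutDescents (w : Equiv.Perm (Fin n)) (r : Fin n) :
    IrFinset w r = cutDescents Finset.univ (· + 1) ⇑w⁻¹ (w⁻¹ r + 1) := by
  rw [IrFinset, ← cycInterval_zero_lastF, cDesL_cycInterval, cycIntervalSucc_zero_lastF,
    cycInterval_zero_lastF]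
  simp only [cutDescents, rotTo_inv_apply, sub_zero]

lemma card_IrFinset (w : Equiv.Perm (Fin n)) (r : Fin n) :
    (IrFinset w r).card = cdesL w 0 Finset.univ := by
  rw [IrFinset_eq_cutDescents, cdesL, ← cycInterval_zero_lastF, cDesL_cycInterval,
    card_cutDescents_cycInterval_eq w⁻¹.injective _ _ 0, cycIntervalSucc_zero_lastF,
    cycInterval_zero_lastF]

lemma card_filter_IrFinset_add_eq_cdesL (w : Equiv.Perm (Fin n)) (r i x : Fin n) :
    ((IrFinset w r).filter (fun a => a - i < x - i)).card +
        (if w⁻¹ i - (w⁻¹ r + 1) < w⁻¹ x - (w⁻¹ r + 1) then 1 else 0) =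
      cdesL w i (cycInterval i x) := by
  rw [IrFinset_eq_cutDescents, ← card_cutDescents_cycInterval_eq_add, cdesL, cDesL_cycInterval,
    card_cutDescents_cycInterval_eq w⁻¹.injective]

lemma card_filter_IrFinset_le_cdesL (w : Equiv.Perm (Fin n)) (r i x : Fin n) :
    ((IrFinset w r).filter (fun a => a - i < x - i)).card ≤ cdesL w i (cycInterval i x) :=
  (card_filter_IrFinset_add_eq_cdesL w r i x).symm ▸ Nat.le_add_right _ _

lemma exists_card_filter_IrFinset_eq_cdesL (w : Equiv.Perm (Fin n)) (i x : Fin n) :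
    ∃ r, ((IrFinset w r).filter (fun a => a - i < x - i)).card = cdesL w i (cycInterval i x) := by
  refine ⟨w (w⁻¹ x - 1), ?_⟩
  have h := card_filter_IrFinset_add_eq_cdesL w (w (w⁻¹ x - 1)) i x
  have hcut : w⁻¹ (w (w⁻¹ x - 1)) = w⁻¹ x - 1 := w.symm_apply_apply _
  rwa [hcut, sub_add_cancel, sub_self, if_neg (Fin.not_lt_zero _),
    add_zero] at h

end CyclicDescents

section Gale

variable {α : Type*} [LinearOrder α]

lemma forall₂_sort_iff {S T : Finset α} {k : ℕ} (hS : S.card = k) (hT : T.card = k) :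
    List.Forall₂ (· ≤ ·) (S.sort (· ≤ ·)) (T.sort (· ≤ ·)) ↔
      ∀ t : Fin k, S.orderEmbOfFin hS t ≤ T.orderEmbOfFin hT t := by
  simp only [List.forall₂_iff_get, Finset.length_sort, hS, hT, true_and,
    Finset.orderEmbOfFin_apply, List.get_eq_getElem]
  exact ⟨fun h t => h t t.2 t.2, fun h t h₁ _ => h ⟨t, h₁⟩⟩

lemma le_orderEmbOfFin_iff_card_filter_lt_le {T : Finset α} {k : ℕ} (hT : T.card = k) (v : α)
    (t : Fin k) : v ≤ T.orderEmbOfFin hT t ↔ (T.filter (· < v)).card ≤ t := by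
  set e := T.orderEmbOfFin hT
  have hcard : (T.filter (· < v)).card = (Finset.univ.filter fun j => e j < v).card := by
    conv_lhs => rw [← T.image_orderEmbOfFin_univ hT]
    rw [Finset.filter_image, Finset.card_image_of_injective _ e.injective]
  rw [hcard]
  constructor
  · intro hv
    calc (Finset.univ.filter fun j => e j < v).card ≤ (Finset.Iio t).card := by
          refine Finset.card_le_card fun j hj => ?_
          simp only [Finset.mem_filter, Finset.mem_univ, true_and] at hj
          exact Finset.mem_Iio.2 (e.lt_iff_lt.1 (hj.trans_le hv))
      _ = t := Fin.card_Iio t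
  · intro hle
    by_contra! hv
    have := calc t.val + 1 = (Finset.Iic t).card := (Fin.card_Iic t).symm
      _ ≤ (Finset.univ.filter fun j => e j < v).card := by
          refine Finset.card_le_card fun j hj => ?_
          simp only [Finset.mem_filter, Finset.mem_univ, true_and]
          exact (e.monotone (Finset.mem_Iic.1 hj)).trans_lt hv
    omega

end Gale

lemma galeLE_iff_card_filter_le [NeZero n] {i : Fin n} {S T : Finset (Fin n)} {k : ℕ}
    (hS : S.card = k) (hT : T.card = k) :
    galeLE i S T ↔ ∀ t : Fin k, (T.filter fun a => a - i < nthGale i S t - i).card ≤ t := by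
  have hS' : (S.image (· - i)).card = k := by
    rw [Finset.card_image_of_injective _ sub_left_injective, hS]
  have hT' : (T.image (· - i)).card = k := by
    rw [Finset.card_image_of_injective _ sub_left_injective, hT]
  have hnth (t : Fin k) : nthGale i S t - i = (S.image (· - i)).orderEmbOfFin hS' t := by
    rw [nthGale, add_sub_cancel_right, Finset.orderEmbOfFin_apply, List.getD_eq_getElem]
    rfl
  unfold galeLE
  rw [forall₂_sort_iff hS' hT']
  refine forall_congr' fun t => ?_
  rw [le_orderEmbOfFin_iff_card_filter_lt_le, Finset.filter_image,
    Finset.card_image_of_injective _ sub_left_injective, hnth]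

theorem DJ_two_characterizations_general
    (n k : ℕ) [NeZero n]
    (J : Fin n → Finset (Fin n)) (hJ : IsGrassmannNecklace n k J)
    (w : Equiv.Perm (Fin n))
    (hcd : cdesL w 0 Finset.univ = k) :
    (∀ i : Fin n, ∀ j : Fin k,
        cdesL w i (cycInterval i (nthGale i (J i) j.val)) ≤ j.val) ↔
      ∀ r j : Fin n, galeLE j (J j) (IrFinset w r) := by
  have hcard (r : Fin n) : (IrFinset w r).card = k := (card_IrFinset w r).trans hcd
  simp only [fun r i => galeLE_iff_card_filter_le (i := i) (hJ.1 i) (hcard r)]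
  constructor
  · intro h r i t
    exact (card_filter_IrFinset_le_cdesL w r i _).trans (h i t)
  · intro h i t
    obtain ⟨r, hr⟩ := exists_card_filter_IrFinset_eq_cdesL w i (nthGale i (J i) t)
    exact hr ▸ h r i t

theorem DJ_two_characterizations
    (n k : ℕ) [NeZero n] (hk1 : 1 ≤ k) (hkn : k ≤ n - 1)
    (J : Fin n → Finset (Fin n)) (hJ : IsGrassmannNecklace n k J)
    (w : Equiv.Perm (Fin n)) (hw : w (lastF n) = lastF n)
    (hcd : cdesL w 0 Finset.univ = k) :
    (∀ i : Fin n, ∀ j : Fin k,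
        cdesL w i (cycInterval i (nthGale i (J i) j.val)) ≤ j.val) ↔
      ∀ r j : Fin n, galeLE j (J j) (IrFinset w r) :=
  DJ_two_characterizations_general n k J hJ w hcd

end PositroidPaper
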